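/- In the diffusion-approximation setup, let X₀^{(m)} ∈ ℕ satisfy X₀^{(m)}/m → X̃₀ > 0 and let t ∈ [0,∞). Let I^{(m)}_n denote the relative entropy between the n-step path laws with parameters (β_A^{(m)}, α_A^{(m)}) and (β_H^{(m)}, α_H^{(m)}) and initial size X₀^{(m)}. Then lim_{m→∞} I^{(m)}_{⌊σ²·m·t⌋} exists and equals ((κ_A − κ_H)²/(2σ²·κ_A))·[ (X̃₀ − η/κ_A)·(1 − e^{−κ_A·t}) + η·t ] if κ_A > 0, and equals (κ_H²/(2σ²))·[ (η/2)·t² + X̃₀·t ] if κ_A = 0. -/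

import Mathlib

/-!
Both path laws have immigration rate `β_• · c` with the same `c = η/σ²`, so one Poisson step of
`p_A` is one step of `p_H` multiplied by `exp (y log (β_A/β_H) + (β_H - β_A)(x + c))`. The
log-likelihood ratio of a path is therefore an additive functional, affine in consecutive
generation sizes, and the relative entropy is `KL(β_A, β_H) · Σ_{k<n} (E X_k + c)` where
`KL(a, b) = a log (a/b) - a + b` and `E X_k = β_A^k x + β_A c (1 + ⋯ + β_A^{k-1})`.
In the diffusion scaling `m² KL → (κ_A - κ_H)²/(2σ⁴)`, while the geometric sums over
`⌊σ²mt⌋` steps, divided by `m` and `m²`, converge because `(1 - κ/(σ²m))^⌊σ²mt⌋ → e^{-κt}`.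
-/

open Real Filter

/-- One transition weight of the Poisson Galton–Watson process with immigration:
probability that the next generation size is `y` given the previous size is `x`. -/
noncomputable def gwStep (β α : ℝ) (x y : ℕ) : ℝ :=
  Real.exp (-(β * (x : ℝ) + α)) * (β * (x : ℝ) + α) ^ y / (Nat.factorial y : ℝ)

/-- The `n`-step path law (pmf on `Fin n → ℕ`) with initial generation size `ω₀`. -/
noncomputable def gwPath (β α : ℝ) (ω₀ n : ℕ) (ω : Fin n → ℕ) : ℝ :=
  ∏ k : Fin n,
    gwStep β α
      (if (k : ℕ) = 0 then ω₀ else ω ⟨(k : ℕ) - 1, Nat.lt_of_le_of_lt (Nat.sub_le _ _) k.2⟩)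
      (ω k)

/-- Relative entropy between the `n`-step path laws (summands with vanishing
`p_A` contribute `0`, since they are multiplied by `p_A`). -/
noncomputable def relEnt (βA αA βH αH : ℝ) (ω₀ n : ℕ) : ℝ :=
  ∑' ω : Fin n → ℕ,
    gwPath βA αA ω₀ n ω * Real.log (gwPath βA αA ω₀ n ω / gwPath βH αH ω₀ n ω)

open Finset Topology

section PathFunctional

variable {M : Type*}

/-- `Fin.cons ω₀ ω k.castSucc` is the generation preceding `ω k`, with `ω₀` before `ω 0`. -/
@[to_additive]
def pathProd [CommMonoid M] (g : ℕ → ℕ → M) (ω₀ n : ℕ) (ω : Fin n → ℕ) : M :=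
  ∏ k : Fin n, g ((Fin.cons ω₀ ω : Fin (n + 1) → ℕ) k.castSucc) (ω k)

@[to_additive]
lemma pathProd_zero [CommMonoid M] (g : ℕ → ℕ → M) (ω₀ : ℕ) (ω : Fin 0 → ℕ) :
    pathProd g ω₀ 0 ω = 1 :=
  Fintype.prod_empty _

@[to_additive]
lemma pathProd_cons [CommMonoid M] (g : ℕ → ℕ → M) (ω₀ n y : ℕ) (ω : Fin n → ℕ) :
    pathProd g ω₀ (n + 1) (Fin.cons y ω) = g ω₀ y * pathProd g y n ω := by
  simp [pathProd, Fin.prod_univ_succ]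

@[to_additive]
lemma pathProd_mul [CommMonoid M] (g h : ℕ → ℕ → M) (ω₀ n : ℕ) (ω : Fin n → ℕ) :
    pathProd (fun a b => g a b * h a b) ω₀ n ω = pathProd g ω₀ n ω * pathProd h ω₀ n ω :=
  prod_mul_distrib

@[to_additive]
lemma pathProd_div [CommGroup M] (g h : ℕ → ℕ → M) (ω₀ n : ℕ) (ω : Fin n → ℕ) :
    pathProd (fun a b => g a b / h a b) ω₀ n ω = pathProd g ω₀ n ω / pathProd h ω₀ n ω :=
  prod_div_distrib ..

end PathFunctional

lemma exp_pathSum (g : ℕ → ℕ → ℝ) (ω₀ n : ℕ) (ω : Fin n → ℕ) :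
    exp (pathSum g ω₀ n ω) = pathProd (fun a b => exp (g a b)) ω₀ n ω :=
  exp_sum _ _

lemma gwPath_eq_pathProd (β α : ℝ) (ω₀ n : ℕ) : gwPath β α ω₀ n = pathProd (gwStep β α) ω₀ n := by
  funext ω
  refine prod_congr rfl fun ⟨k, hk⟩ _ => ?_
  cases k <;> rfl

lemma gwPath_cons (β α : ℝ) (x n y : ℕ) (w : Fin n → ℕ) :
    gwPath β α x (n + 1) (Fin.cons y w) = gwStep β α x y * gwPath β α y n w := by
  simp only [gwPath_eq_pathProd, pathProd_cons]

lemma hasSum_fin_cons_of_nonneg {α : Type*} {n : ℕ} {f : (Fin (n + 1) → α) → ℝ} (hf : 0 ≤ f)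
    {s : α → ℝ} {a : ℝ} (hfib : ∀ y, HasSum (fun w => f (Fin.cons y w)) (s y))
    (hs : HasSum s a) : HasSum f a := by
  rw [← (Fin.consEquiv fun _ => α).hasSum_iff]
  have hfib' (y : α) : HasSum (fun w => (f ∘ Fin.consEquiv fun _ => α) (y, w)) (s y) := hfib y
  have hF : Summable (f ∘ Fin.consEquiv fun _ => α) :=
    (summable_prod_of_nonneg fun _ => hf _).2
      ⟨fun y => (hfib' y).summable, hs.summable.congr fun y => (hfib' y).tsum_eq.symm⟩
  convert hF.hasSum
  rw [hF.tsum_prod' fun y => (hfib' y).summable]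
  exact (tsum_congr fun y => (hfib' y).tsum_eq).trans hs.tsum_eq |>.symm

lemma gwStep_nonneg {β α : ℝ} (hβ : 0 ≤ β) (hα : 0 ≤ α) (x y : ℕ) : 0 ≤ gwStep β α x y := by
  unfold gwStep
  positivity

lemma hasSum_gwStep (β α : ℝ) (x : ℕ) : HasSum (gwStep β α x) 1 := by
  have h := (NormedSpace.expSeries_div_hasSum_exp (β * x + α)).mul_left (exp (-(β * x + α)))
  rw [← exp_eq_exp_ℝ, ← exp_add, neg_add_cancel, exp_zero] at h
  exact h.congr_fun fun y => mul_div_assoc ..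

lemma hasSum_natCast_mul_gwStep (β α : ℝ) (x : ℕ) :
    HasSum (fun y => y * gwStep β α x y) (β * x + α) := by
  rw [← hasSum_nat_add_iff' 1, sum_range_one, Nat.cast_zero, zero_mul, sub_zero,
    ← mul_one (β * x + α)]
  refine ((hasSum_gwStep β α x).mul_left (β * x + α)).congr_fun fun y => ?_
  simp only [gwStep, Nat.factorial_succ, pow_succ]
  push_cast
  field_simp

lemma hasSum_gwStep_mul_affine (β α a b : ℝ) (x : ℕ) :
    HasSum (fun y => gwStep β α x y * (a * y + b)) (a * (β * x + α) + b) := by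
  rw [← mul_one b]
  exact (((hasSum_natCast_mul_gwStep β α x).mul_left a).add
    ((hasSum_gwStep β α x).mul_left b)).congr_fun fun y => by ring

/-- The expected size of generation `k` when generation `0` has size `x`. -/
def gwMean (β α : ℝ) (x k : ℕ) : ℝ := β ^ k * x + α * ∑ i ∈ range k, β ^ i

lemma gwMean_zero (β α : ℝ) (x : ℕ) : gwMean β α x 0 = x := by simp [gwMean]

lemma gwMean_one (β α : ℝ) (x : ℕ) : gwMean β α x 1 = β * x + α := by simp [gwMean]

lemma hasSum_gwStep_mul_gwMean (β α : ℝ) (x k : ℕ) :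
    HasSum (fun y => gwStep β α x y * gwMean β α y k) (gwMean β α x (k + 1)) := by
  have h := hasSum_gwStep_mul_affine β α (β ^ k) (α * ∑ i ∈ range k, β ^ i) x
  rw [show β ^ k * (β * x + α) + α * ∑ i ∈ range k, β ^ i = gwMean β α x (k + 1) by
    rw [gwMean, sum_range_succ]; ring] at h
  exact h.congr_fun fun y => by rw [gwMean]

lemma gwStep_eq_exp_mul {βA βH : ℝ} (hβA : 0 < βA) (hβH : 0 < βH) (c : ℝ) (x y : ℕ) :
    gwStep βA (βA * c) x y =
      exp (log (βA / βH) * y + (βH - βA) * x + (βH - βA) * c) * gwStep βH (βH * c) x y := by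
  have hpow : exp (log (βA / βH) * y) = (βA / βH) ^ y := by
    rw [mul_comm, ← log_pow, exp_log (by positivity)]
  have hexp : exp (-(βA * x + βA * c)) =
      exp ((βH - βA) * x + (βH - βA) * c) * exp (-(βH * x + βH * c)) := by
    rw [← exp_add]
    ring_nf
  rw [add_assoc, exp_add, hpow, gwStep, gwStep, hexp,
    show βA * x + βA * c = βA / βH * (βH * x + βH * c) by field_simp, mul_pow]
  ring

section PathLaw

variable {β α : ℝ}

lemma gwPath_nonneg (hβ : 0 ≤ β) (hα : 0 ≤ α) (x n : ℕ) : 0 ≤ gwPath β α x n :=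
  fun _ => prod_nonneg fun _ _ => gwStep_nonneg hβ hα _ _

lemma hasSum_gwPath (hβ : 0 ≤ β) (hα : 0 ≤ α) (n x : ℕ) : HasSum (gwPath β α x n) 1 := by
  induction n generalizing x with
  | zero =>
    simpa only [gwPath_eq_pathProd, pathProd_zero] using hasSum_unique (gwPath β α x 0)
  | succ n ih =>
    refine hasSum_fin_cons_of_nonneg (gwPath_nonneg hβ hα x _) (fun y => ?_) (hasSum_gwStep β α x)
    simpa only [gwPath_cons, mul_one] using (ih y).mul_left (gwStep β α x y)

lemma hasSum_gwPath_mul_pathSum_of_nonneg (hβ : 0 ≤ β) (hα : 0 ≤ α) {A B C : ℝ} (hA : 0 ≤ A)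
    (hB : 0 ≤ B) (hC : 0 ≤ C) (n x : ℕ) :
    HasSum (fun ω => gwPath β α x n ω * pathSum (fun x y => A * y + B * x + C) x n ω)
      (∑ k ∈ range n, (A * gwMean β α x (k + 1) + B * gwMean β α x k + C)) := by
  induction n generalizing x with
  | zero => simpa only [pathSum_zero, mul_zero, sum_range_zero] using hasSum_zero
  | succ n ih =>
    have hnonneg : 0 ≤ fun ω => gwPath β α x (n + 1) ω *
        pathSum (fun x y => A * y + B * x + C) x (n + 1) ω :=
      fun ω => mul_nonneg (gwPath_nonneg hβ hα x _ ω) (sum_nonneg fun _ _ => by positivity)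
    refine hasSum_fin_cons_of_nonneg hnonneg (s := fun y => gwStep β α x y * (A * y + B * x + C +
      ∑ k ∈ range n, (A * gwMean β α y (k + 1) + B * gwMean β α y k + C))) (fun y => ?_) ?_
    · rw [← mul_one (A * y + B * x + C)]
      exact (((hasSum_gwPath hβ hα n y).mul_left (A * y + B * x + C)).add (ih y)).mul_left
        (gwStep β α x y) |>.congr_fun fun w => by rw [gwPath_cons, pathSum_cons]; ring
    · have hfirst := hasSum_gwStep_mul_affine β α A (B * x + C) x
      have hterm (k : ℕ) : HasSum (fun y => gwStep β α x y *
          (A * gwMean β α y (k + 1) + B * gwMean β α y k + C))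
          (A * gwMean β α x (k + 1 + 1) + B * gwMean β α x (k + 1) + C) := by
        rw [← mul_one C]
        exact (((hasSum_gwStep_mul_gwMean β α x (k + 1)).mul_left A).add
          ((hasSum_gwStep_mul_gwMean β α x k).mul_left B) |>.add
          ((hasSum_gwStep β α x).mul_left C)).congr_fun fun y => by ring
      rw [sum_range_succ', gwMean_zero, gwMean_one, add_assoc (A * _)]
      exact (hasSum_sum fun k _ => hterm k).add hfirst |>.congr_fun fun y => by
        rw [mul_add, mul_sum]
        ring

lemma hasSum_gwPath_mul_pathSum (hβ : 0 ≤ β) (hα : 0 ≤ α) (A B C : ℝ) (n x : ℕ) :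
    HasSum (fun ω => gwPath β α x n ω * pathSum (fun x y => A * y + B * x + C) x n ω)
      (∑ k ∈ range n, (A * gwMean β α x (k + 1) + B * gwMean β α x k + C)) := by
  -- Summability is automatic for nonnegative functionals: split off `|A| y + |B| x + |C|`.
  have hpos := hasSum_gwPath_mul_pathSum_of_nonneg hβ hα (neg_le_iff_add_nonneg.1 (neg_abs_le A))
    (neg_le_iff_add_nonneg.1 (neg_abs_le B)) (neg_le_iff_add_nonneg.1 (neg_abs_le C)) n x
  have habs := hasSum_gwPath_mul_pathSum_of_nonneg hβ hα (abs_nonneg A) (abs_nonneg B)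
    (abs_nonneg C) n x
  rw [show ∑ k ∈ range n, (A * gwMean β α x (k + 1) + B * gwMean β α x k + C) =
      ∑ k ∈ range n, ((A + |A|) * gwMean β α x (k + 1) + (B + |B|) * gwMean β α x k + (C + |C|)) -
        ∑ k ∈ range n, (|A| * gwMean β α x (k + 1) + |B| * gwMean β α x k + |C|) by
    rw [← sum_sub_distrib]
    exact sum_congr rfl fun k _ => by ring]
  refine (hpos.sub habs).congr_fun fun ω => ?_
  rw [← mul_sub, ← pathSum_sub]
  congr 2
  funext a b
  ring

end PathLaw

lemma mul_log_div_of_eq_exp_mul {p q G : ℝ} (h : p = exp G * q) : p * log (p / q) = p * G := by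
  rcases eq_or_ne q 0 with hq | hq
  · simp [h, hq]
  · rw [h, mul_div_assoc, div_self hq, mul_one, log_exp]

section RelativeEntropy

variable {βA βH : ℝ}

lemma gwPath_eq_exp_mul (hβA : 0 < βA) (hβH : 0 < βH) (c : ℝ) (x n : ℕ) (ω : Fin n → ℕ) :
    gwPath βA (βA * c) x n ω = exp (pathSum (fun x y => log (βA / βH) * y + (βH - βA) * x +
      (βH - βA) * c) x n ω) * gwPath βH (βH * c) x n ω := by
  rw [gwPath_eq_pathProd, gwPath_eq_pathProd, exp_pathSum, ← pathProd_mul]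
  congr 1
  funext a b
  exact gwStep_eq_exp_mul hβA hβH c a b

/-- The relative entropy of `Poisson (a λ)` with respect to `Poisson (b λ)` is `λ * poissonKL a b`. -/
noncomputable def poissonKL (a b : ℝ) : ℝ := a * log (a / b) - a + b

lemma relEnt_eq {c : ℝ} (hβA : 0 < βA) (hβH : 0 < βH) (hc : 0 ≤ c) (x n : ℕ) :
    relEnt βA (βA * c) βH (βH * c) x n = poissonKL βA βH *
      (x * ∑ i ∈ range n, βA ^ i + c * ∑ k ∈ range n, ∑ i ∈ range (k + 1), βA ^ i) := by
  have h := hasSum_gwPath_mul_pathSum hβA.le (mul_nonneg hβA.le hc) (log (βA / βH)) (βH - βA)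
    ((βH - βA) * c) n x
  rw [relEnt, tsum_congr fun ω => mul_log_div_of_eq_exp_mul (gwPath_eq_exp_mul hβA hβH c x n ω),
    h.tsum_eq, mul_sum, mul_sum, ← sum_add_distrib, mul_sum]
  refine sum_congr rfl fun k _ => ?_
  simp only [gwMean, poissonKL, geom_sum_succ]
  ring

end RelativeEntropy

lemma eventually_abs_div_natCast_le (κ : ℝ) {ε : ℝ} (hε : 0 < ε) :
    ∀ᶠ m : ℕ in atTop, |κ / m| ≤ ε := by
  have h := (tendsto_const_div_atTop_nhds_zero_nat κ).abs
  rw [abs_zero] at h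
  exact h.eventually (ge_mem_nhds hε)

lemma tendsto_one_sub_div_natCast (κ : ℝ) : Tendsto (fun m : ℕ => 1 - κ / m) atTop (𝓝 1) := by
  simpa using (tendsto_const_nhds (x := (1 : ℝ))).sub (tendsto_const_div_atTop_nhds_zero_nat κ)

lemma eventually_one_sub_div_natCast_pos (κ : ℝ) : ∀ᶠ m : ℕ in atTop, 0 < 1 - κ / m :=
  (tendsto_one_sub_div_natCast κ).eventually_const_lt one_pos

lemma tendsto_sq_mul_log_one_sub_add (κ : ℝ) :
    Tendsto (fun m : ℕ => (m : ℝ) ^ 2 * (log (1 - κ / m) + κ / m + (κ / m) ^ 2 / 2))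
      atTop (𝓝 0) := by
  refine squeeze_zero_norm' ?_ (tendsto_const_div_atTop_nhds_zero_nat (2 * |κ| ^ 3))
  filter_upwards [eventually_abs_div_natCast_le κ one_half_pos, eventually_ge_atTop 1]
    with m hsmall hm
  have hm : (0 : ℝ) < m := by exact_mod_cast hm
  have htaylor := abs_log_sub_add_sum_range_le (hsmall.trans_lt one_half_lt_one) 2
  simp only [sum_range_succ, sum_range_zero] at htaylor
  norm_num at htaylor
  have hrem : |κ / m| ^ 3 / (1 - |κ / m|) ≤ 2 * |κ / m| ^ 3 := by
    rw [div_le_iff₀ (by linarith)]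
    nlinarith [pow_nonneg (abs_nonneg (κ / m)) 3]
  rw [norm_mul, norm_pow, Real.norm_natCast, Real.norm_eq_abs]
  calc (m : ℝ) ^ 2 * |log (1 - κ / m) + κ / m + (κ / m) ^ 2 / 2|
      ≤ m ^ 2 * (2 * |κ / m| ^ 3) := by
        gcongr
        refine le_trans (le_of_eq ?_) (htaylor.trans hrem)
        ring_nf
    _ = 2 * |κ| ^ 3 / m := by
        rw [abs_div, Nat.abs_cast]
        field_simp

lemma tendsto_sq_mul_poissonKL (κA κH : ℝ) :
    Tendsto (fun m : ℕ => (m : ℝ) ^ 2 * poissonKL (1 - κA / m) (1 - κH / m))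
      atTop (𝓝 ((κA - κH) ^ 2 / 2)) := by
  have h := ((tendsto_one_sub_div_natCast κA).mul
    ((tendsto_sq_mul_log_one_sub_add κA).sub (tendsto_sq_mul_log_one_sub_add κH))).add
    ((tendsto_const_nhds (x := (κA - κH) ^ 2 / 2)).sub
      (tendsto_const_div_atTop_nhds_zero_nat (κA * (κH ^ 2 - κA ^ 2) / 2)))
  rw [sub_self, mul_zero, zero_add, sub_zero] at h
  refine h.congr' ?_
  filter_upwards [eventually_one_sub_div_natCast_pos κA, eventually_one_sub_div_natCast_pos κH,
    eventually_ne_atTop 0] with m hA hH hm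
  have hm : (m : ℝ) ≠ 0 := Nat.cast_ne_zero.2 hm
  rw [poissonKL, log_div hA.ne' hH.ne']
  field_simp
  ring

lemma tendsto_natFloor_mul_div_natCast {τ : ℝ} (hτ : 0 ≤ τ) :
    Tendsto (fun m : ℕ => (⌊τ * m⌋₊ : ℝ) / m) atTop (𝓝 τ) :=
  (tendsto_nat_floor_mul_div_atTop hτ).comp tendsto_natCast_atTop_atTop

lemma tendsto_one_sub_div_pow_natFloor (κ : ℝ) {τ : ℝ} (hτ : 0 ≤ τ) :
    Tendsto (fun m : ℕ => (1 - κ / m) ^ ⌊τ * m⌋₊) atTop (𝓝 (exp (-κ * τ))) := by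
  have hlog : Tendsto (fun m : ℕ => (m : ℝ) * log (1 + -κ / m)) atTop (𝓝 (-κ)) :=
    (tendsto_mul_log_one_add_div_atTop (-κ)).comp tendsto_natCast_atTop_atTop
  have h := (continuous_exp.tendsto _).comp (hlog.mul (tendsto_natFloor_mul_div_natCast hτ))
  refine h.congr' ?_
  filter_upwards [eventually_one_sub_div_natCast_pos κ, eventually_ne_atTop 0] with m hpos hm
  have hm : (m : ℝ) ≠ 0 := Nat.cast_ne_zero.2 hm
  rw [Function.comp_apply, ← exp_log (pow_pos hpos _), log_pow, neg_div, ← sub_eq_add_neg]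
  congr 1
  field_simp

lemma tendsto_geom_sum_natFloor_div {κ : ℝ} (hκ : κ ≠ 0) {τ : ℝ} (hτ : 0 ≤ τ) :
    Tendsto (fun m : ℕ => (∑ i ∈ range ⌊τ * m⌋₊, (1 - κ / m) ^ i) / m) atTop
      (𝓝 ((1 - exp (-κ * τ)) / κ)) := by
  refine ((tendsto_const_nhds.sub (tendsto_one_sub_div_pow_natFloor κ hτ)).div_const κ).congr' ?_
  filter_upwards [eventually_ne_atTop 0] with m hm
  have hm : (m : ℝ) ≠ 0 := Nat.cast_ne_zero.2 hm
  rw [← geom_sum_mul_neg, sub_sub_cancel]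
  field_simp

lemma sum_geom_sum_succ_mul_one_sub (β : ℝ) (n : ℕ) :
    (∑ k ∈ range n, ∑ i ∈ range (k + 1), β ^ i) * (1 - β) = n - β * ∑ i ∈ range n, β ^ i := by
  rw [sum_mul]
  simp_rw [geom_sum_mul_neg]
  rw [sum_sub_distrib, mul_sum]
  simp [pow_succ']

lemma tendsto_sum_geom_sum_natFloor_div_sq {κ : ℝ} (hκ : κ ≠ 0) {τ : ℝ} (hτ : 0 ≤ τ) :
    Tendsto (fun m : ℕ => (∑ k ∈ range ⌊τ * m⌋₊, ∑ i ∈ range (k + 1), (1 - κ / m) ^ i) / m ^ 2)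
      atTop (𝓝 ((τ - (1 - exp (-κ * τ)) / κ) / κ)) := by
  have h := ((tendsto_natFloor_mul_div_natCast hτ).sub ((tendsto_one_sub_div_natCast κ).mul
    (tendsto_geom_sum_natFloor_div hκ hτ))).div_const κ
  rw [one_mul] at h
  refine h.congr' ?_
  filter_upwards [eventually_ne_atTop 0] with m hm
  have hm : (m : ℝ) ≠ 0 := Nat.cast_ne_zero.2 hm
  have key := sum_geom_sum_succ_mul_one_sub (1 - κ / m) ⌊τ * m⌋₊
  rw [sub_sub_cancel] at key
  generalize (1 - κ / m) = β at key ⊢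
  rw [← mul_div_assoc, ← sub_div, ← key]
  field_simp

lemma tendsto_sum_range_succ_natFloor_div_sq {τ : ℝ} (hτ : 0 ≤ τ) :
    Tendsto (fun m : ℕ => (∑ k ∈ range ⌊τ * m⌋₊, ((k : ℝ) + 1)) / m ^ 2) atTop
      (𝓝 (τ ^ 2 / 2)) := by
  have hfloor := tendsto_natFloor_mul_div_natCast hτ
  have h := (hfloor.mul (hfloor.add tendsto_one_div_atTop_nhds_zero_nat)).div_const 2
  rw [add_zero, ← sq] at h
  refine h.congr' ?_
  filter_upwards [eventually_ne_atTop 0] with m hm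
  have hm : (m : ℝ) ≠ 0 := Nat.cast_ne_zero.2 hm
  have gauss (n : ℕ) : ∑ k ∈ range n, ((k : ℝ) + 1) = n * (n + 1) / 2 := by
    induction n with
    | zero => simp
    | succ n ih =>
      rw [sum_range_succ, ih]
      push_cast
      ring
  rw [gauss]
  field_simp

lemma relEnt_diffusion_eventuallyEq (κA κH τ : ℝ) {c : ℝ} (hc : 0 ≤ c) (x : ℕ → ℕ) :
    (fun m : ℕ =>
      relEnt (1 - κA / m) ((1 - κA / m) * c) (1 - κH / m) ((1 - κH / m) * c) (x m) ⌊τ * m⌋₊)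
      =ᶠ[atTop] fun m : ℕ => (m ^ 2 * poissonKL (1 - κA / m) (1 - κH / m)) *
        ((∑ i ∈ range ⌊τ * m⌋₊, (1 - κA / m) ^ i) / m * (x m / m) +
          c * ((∑ k ∈ range ⌊τ * m⌋₊, ∑ i ∈ range (k + 1), (1 - κA / m) ^ i) / m ^ 2)) := by
  filter_upwards [eventually_one_sub_div_natCast_pos κA, eventually_one_sub_div_natCast_pos κH,
    eventually_ne_atTop 0] with m hA hH hm
  have hm : (m : ℝ) ≠ 0 := Nat.cast_ne_zero.2 hm
  rw [relEnt_eq hA hH hc]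
  field_simp

section Diffusion

variable {κA κH τ c X : ℝ} {x : ℕ → ℕ}

lemma tendsto_relEnt_diffusion (hκA : κA ≠ 0) (hτ : 0 ≤ τ) (hc : 0 ≤ c)
    (hx : Tendsto (fun m : ℕ => (x m : ℝ) / m) atTop (𝓝 X)) :
    Tendsto (fun m : ℕ =>
      relEnt (1 - κA / m) ((1 - κA / m) * c) (1 - κH / m) ((1 - κH / m) * c) (x m) ⌊τ * m⌋₊)
      atTop (𝓝 ((κA - κH) ^ 2 / 2 * ((1 - exp (-κA * τ)) / κA * X +
        c * ((τ - (1 - exp (-κA * τ)) / κA) / κA)))) :=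
  ((tendsto_sq_mul_poissonKL κA κH).mul (((tendsto_geom_sum_natFloor_div hκA hτ).mul hx).add
    ((tendsto_sum_geom_sum_natFloor_div_sq hκA hτ).const_mul c))).congr'
    (relEnt_diffusion_eventuallyEq κA κH τ hc x).symm

lemma tendsto_relEnt_diffusion_of_critical (hτ : 0 ≤ τ) (hc : 0 ≤ c)
    (hx : Tendsto (fun m : ℕ => (x m : ℝ) / m) atTop (𝓝 X)) :
    Tendsto (fun m : ℕ => relEnt 1 c (1 - κH / m) ((1 - κH / m) * c) (x m) ⌊τ * m⌋₊)
      atTop (𝓝 (κH ^ 2 / 2 * (τ * X + c * (τ ^ 2 / 2)))) := by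
  have h := relEnt_diffusion_eventuallyEq 0 κH τ hc x
  simp only [zero_div, sub_zero, one_mul, one_pow, sum_const, card_range, nsmul_eq_mul, mul_one,
    Nat.cast_succ] at h
  have hKL := tendsto_sq_mul_poissonKL 0 κH
  simp only [zero_div, sub_zero, zero_sub, neg_sq] at hKL
  exact (hKL.mul (((tendsto_natFloor_mul_div_natCast hτ).mul hx).add
    ((tendsto_sum_range_succ_natFloor_div_sq hτ).const_mul c))).congr' h.symm

end Diffusion

theorem relEnt_diffusion_limit_general (σ η κA κH t : ℝ)
    (hσ : 0 < σ) (hη : 0 ≤ η) (ht : 0 ≤ t)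
    (X₀ : ℕ → ℕ) (Xt : ℝ)
    (hX₀ : Tendsto (fun m : ℕ => (X₀ m : ℝ) / (m : ℝ)) atTop (nhds Xt))
    (Im : ℕ → ℝ)
    (hIm : ∀ m : ℕ, Im m = relEnt
      (1 - κA / (σ ^ 2 * (m : ℝ))) ((1 - κA / (σ ^ 2 * (m : ℝ))) * η / σ ^ 2)
      (1 - κH / (σ ^ 2 * (m : ℝ))) ((1 - κH / (σ ^ 2 * (m : ℝ))) * η / σ ^ 2)
      (X₀ m) (Nat.floor (σ ^ 2 * (m : ℝ) * t))) :
    (0 < κA → Tendsto Im atTop (nhds (((κA - κH) ^ 2 / (2 * σ ^ 2 * κA))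
      * ((Xt - η / κA) * (1 - Real.exp (-κA * t)) + η * t)))) ∧
    (κA = 0 → Tendsto Im atTop (nhds ((κH ^ 2 / (2 * σ ^ 2))
      * ((η / 2) * t ^ 2 + Xt * t)))) := by
  have hσ2 : σ ^ 2 ≠ 0 := by positivity
  have hτ : 0 ≤ σ ^ 2 * t := by positivity
  have hc : 0 ≤ η / σ ^ 2 := by positivity
  have hIm' : Im = fun m : ℕ => relEnt (1 - κA / σ ^ 2 / m) ((1 - κA / σ ^ 2 / m) * (η / σ ^ 2))
      (1 - κH / σ ^ 2 / m) ((1 - κH / σ ^ 2 / m) * (η / σ ^ 2)) (X₀ m) ⌊σ ^ 2 * t * m⌋₊ := by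
    funext m
    rw [hIm, div_div, div_div, mul_div_assoc, mul_div_assoc, mul_right_comm (σ ^ 2) (m : ℝ) t]
  refine ⟨fun hκA => ?_, fun hκA => ?_⟩
  · rw [hIm']
    convert tendsto_relEnt_diffusion (κH := κH / σ ^ 2) (div_ne_zero hκA.ne' hσ2) hτ hc hX₀
      using 2
    field_simp
    ring
  · subst hκA
    simp only [zero_div, sub_zero, one_mul] at hIm'
    rw [hIm']
    convert tendsto_relEnt_diffusion_of_critical (κH := κH / σ ^ 2) hτ hc hX₀ using 2
    field_simp
    ring

/-- Closed-form limit of the relative entropy in the diffusion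
approximation: with `β_•^{(m)} = 1 − κ_•/(σ²m)`, `α_•^{(m)} = β_•^{(m)}·η/σ²`, initial
sizes `X₀^{(m)}/m → X̃₀ > 0` and horizon `⌊σ²mt⌋`, the relative entropies converge to the
stated value (distinguishing the cases `κ_A > 0` and `κ_A = 0`). -/
theorem relEnt_diffusion_limit (σ η κA κH t : ℝ)
    (hσ : 0 < σ) (hη : 0 ≤ η) (hκA : 0 ≤ κA) (hκH : 0 ≤ κH) (hκ : κA ≠ κH) (ht : 0 ≤ t)
    (X₀ : ℕ → ℕ) (Xt : ℝ) (hXt : 0 < Xt)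
    (hX₀ : Tendsto (fun m : ℕ => (X₀ m : ℝ) / (m : ℝ)) atTop (nhds Xt))
    (Im : ℕ → ℝ)
    (hIm : ∀ m : ℕ, Im m = relEnt
      (1 - κA / (σ ^ 2 * (m : ℝ))) ((1 - κA / (σ ^ 2 * (m : ℝ))) * η / σ ^ 2)
      (1 - κH / (σ ^ 2 * (m : ℝ))) ((1 - κH / (σ ^ 2 * (m : ℝ))) * η / σ ^ 2)
      (X₀ m) (Nat.floor (σ ^ 2 * (m : ℝ) * t))) :
    (0 < κA → Tendsto Im atTop (nhds (((κA - κH) ^ 2 / (2 * σ ^ 2 * κA))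
      * ((Xt - η / κA) * (1 - Real.exp (-κA * t)) + η * t)))) ∧
    (κA = 0 → Tendsto Im atTop (nhds ((κH ^ 2 / (2 * σ ^ 2))
      * ((η / 2) * t ^ 2 + Xt * t)))) :=
  relEnt_diffusion_limit_general σ η κA κH t hσ hη ht X₀ Xt hX₀ Im hIm
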